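/- Let g_c(λ) := ∑_{k=1}^{M} a_k cos(kλ) where 0 < c ≤ 1, M is a positive integer, and a_k := (c²/π)/k for k ∈ {1,2}, a_k := (c²/π)/(k log k) for k ≥ 3. Then for every λ with c ≤ |λ| ≤ π one has |g_c(λ)| ≤ c, and for every λ with |λ| ≤ c one has −c ≤ g_c(λ) ≤ ∑_{k=1}^{M} a_k. -/

import Mathlib

/-!
For `c ≤ |λ| ≤ π`, summation by parts against the Dirichlet-kernel bound
`|∑_{N<k≤n} cos kλ| ≤ 1 / sin (|λ|/2) ≤ π / |λ|` gives `|g_c(λ)| ≤ a_1 π / |λ| = c² / |λ| ≤ c`.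
For `0 < |λ| ≤ c ≤ 1` and `N = ⌊1/|λ|⌋`, the terms with `k ≤ N` have `kλ ≤ 1 < π/2` and are
nonnegative, while the same bound controls the rest by `a_{N+1} π / |λ| ≤ c² / ((N+1)|λ|) ≤ c²`.
-/

open Real

/-- The coefficients `a_k` of Step 3.5 of the paper (with `a_0 := 0`, unused). -/
noncomputable def coeffA (c : ℝ) (k : ℕ) : ℝ :=
  if k = 0 then 0
  else if k ≤ 2 then c^2 / (π * k)
  else c^2 / (π * k * Real.log k)

/-- The trigonometric polynomial `g_c(λ) = ∑_{k=1}^M a_k cos(kλ)`. -/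
noncomputable def gc (c : ℝ) (M : ℕ) (x : ℝ) : ℝ :=
  ∑ k ∈ Finset.Icc 1 M, coeffA c k * Real.cos (k * x)

open Finset

section SummationByParts

variable {E : Type*} [NormedAddCommGroup E] [NormedSpace ℝ E]

theorem norm_sum_Ioc_smul_le_of_antitoneOn {a : ℕ → ℝ} {f : ℕ → E} {N : ℕ} {B : ℝ}
    (ha : AntitoneOn a (Set.Ioi N)) (ha0 : ∀ k, N < k → 0 ≤ a k)
    (hf : ∀ n, ‖∑ k ∈ Ioc N n, f k‖ ≤ B) (M : ℕ) :
    ‖∑ k ∈ Ioc N M, a k • f k‖ ≤ a (N + 1) * B := by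
  have hB : 0 ≤ B := by simpa using hf N
  rcases le_or_gt M N with hMN | hNM
  · simpa [Ioc_eq_empty_of_le hMN] using mul_nonneg (ha0 _ N.lt_succ_self) hB
  have key : ∀ m, N < m →
      ‖∑ k ∈ Ioc N m, a k • f k - a m • ∑ k ∈ Ioc N m, f k‖ ≤ (a (N + 1) - a m) * B := by
    intro m hm
    induction m, hm using Nat.le_induction with
    | base => simp
    | succ m hm ih =>
      have hstep : a (m + 1) ≤ a m := ha (by simp; omega) (by simp; omega) m.le_succ
      rw [sum_Ioc_succ_top (by omega), sum_Ioc_succ_top (by omega), smul_add,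
        show ∀ u v w z : E, u + w - (v + w) = (u - z) + (z - v) from fun _ _ _ _ => by abel,
        ← sub_smul]
      calc _ ≤ (a (N + 1) - a m) * B + (a m - a (m + 1)) * B := by
            refine (norm_add_le _ _).trans (add_le_add ih ?_)
            rw [norm_smul, Real.norm_of_nonneg (by linarith)]
            exact mul_le_mul_of_nonneg_left (hf m) (by linarith)
        _ = (a (N + 1) - a (m + 1)) * B := by ring
  have hM0 := ha0 M hNM
  calc ‖∑ k ∈ Ioc N M, a k • f k‖
      ≤ ‖∑ k ∈ Ioc N M, a k • f k - a M • ∑ k ∈ Ioc N M, f k‖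
        + ‖a M • ∑ k ∈ Ioc N M, f k‖ := norm_le_norm_sub_add _ _
    _ ≤ (a (N + 1) - a M) * B + a M * B := by
        rw [norm_smul, Real.norm_of_nonneg hM0]
        exact add_le_add (key M hNM) (mul_le_mul_of_nonneg_left (hf M) hM0)
    _ = a (N + 1) * B := by ring

end SummationByParts

theorem two_mul_sin_half_mul_sum_Ioc_cos (x : ℝ) {N n : ℕ} (hNn : N ≤ n) :
    2 * sin (x / 2) * ∑ k ∈ Ioc N n, cos (k * x)
      = sin ((n + 1 / 2) * x) - sin ((N + 1 / 2) * x) := by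
  induction n, hNn using Nat.le_induction with
  | base => simp
  | succ n hn ih =>
    have h := sin_sub_sin (((n : ℝ) + 1 + 1 / 2) * x) ((n + 1 / 2) * x)
    rw [show (((n : ℝ) + 1 + 1 / 2) * x - (n + 1 / 2) * x) / 2 = x / 2 by ring,
      show (((n : ℝ) + 1 + 1 / 2) * x + (n + 1 / 2) * x) / 2 = (n + 1) * x by ring] at h
    rw [sum_Ioc_succ_top hn, mul_add, ih]
    push_cast
    linarith

theorem abs_sum_Ioc_cos_le {x : ℝ} (hx0 : 0 < x) (hxπ : x ≤ π) (N n : ℕ) :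
    |∑ k ∈ Ioc N n, cos (k * x)| ≤ π / x := by
  rcases le_or_gt n N with hnN | hNn
  · simpa [Ioc_eq_empty_of_le hnN] using div_nonneg pi_pos.le hx0.le
  have hsin : x / π ≤ sin (x / 2) :=
    calc x / π = 2 / π * (x / 2) := by ring
      _ ≤ sin (x / 2) := mul_le_sin (by linarith) (by linarith)
  have hsin0 : 0 < sin (x / 2) := (div_pos hx0 pi_pos).trans_le hsin
  have htwo : 2 * sin (x / 2) * |∑ k ∈ Ioc N n, cos (k * x)| ≤ 2 := by
    rw [← abs_of_pos (by positivity : 0 < 2 * sin (x / 2)), ← abs_mul,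
      two_mul_sin_half_mul_sum_Ioc_cos x hNn.le]
    exact (abs_sub _ _).trans
      (add_le_add (abs_sin_le_one _) (abs_sin_le_one _) |>.trans_eq one_add_one_eq_two)
  calc |∑ k ∈ Ioc N n, cos (k * x)| ≤ 1 / sin (x / 2) := by
        rw [le_div_iff₀ hsin0]; linarith
    _ ≤ 1 / (x / π) := one_div_le_one_div_of_le (by positivity) hsin
    _ = π / x := one_div_div x π

theorem abs_sum_Ioc_mul_cos_le {a : ℕ → ℝ} {N : ℕ} (ha : AntitoneOn a (Set.Ioi N))
    (ha0 : ∀ k, N < k → 0 ≤ a k) {x : ℝ} (hx0 : 0 < x) (hxπ : x ≤ π) (M : ℕ) :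
    |∑ k ∈ Ioc N M, a k * cos (k * x)| ≤ a (N + 1) * (π / x) := by
  simpa only [Real.norm_eq_abs, smul_eq_mul] using
    norm_sum_Ioc_smul_le_of_antitoneOn (f := fun k : ℕ => cos (k * x)) ha ha0
      (fun n => (Real.norm_eq_abs _).trans_le (abs_sum_Ioc_cos_le hx0 hxπ N n)) M

theorem neg_le_sum_Ioc_mul_cos {a : ℕ → ℝ} (ha : AntitoneOn a (Set.Ioi 0)) (ha0 : ∀ k, 0 ≤ a k)
    {x : ℝ} (hx0 : 0 < x) (hxπ : x ≤ π) {N : ℕ} (hN : N * x ≤ π / 2) (M : ℕ) :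
    -(a (N + 1) * (π / x)) ≤ ∑ k ∈ Ioc 0 M, a k * cos (k * x) := by
  rw [← sum_filter_add_sum_filter_not _ (· ≤ N)]
  have hhead : 0 ≤ ∑ k ∈ (Ioc 0 M).filter (· ≤ N), a k * cos (k * x) := by
    refine sum_nonneg fun k hk => mul_nonneg (ha0 k) (cos_nonneg_of_mem_Icc ⟨?_, ?_⟩)
    · have : (0 : ℝ) ≤ k * x := by positivity
      linarith [pi_pos]
    · have hkN : (k : ℝ) ≤ N := by exact_mod_cast (mem_filter.mp hk).2
      nlinarith
  have htail : (Ioc 0 M).filter (¬ · ≤ N) = Ioc N M := by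
    ext k
    simp only [mem_filter, mem_Ioc]
    omega
  rw [htail]
  have := abs_sum_Ioc_mul_cos_le (ha.mono (Set.Ioi_subset_Ioi N.zero_le))
    (fun k _ => ha0 k) hx0 hxπ M
  linarith [neg_abs_le (∑ k ∈ Ioc N M, a k * cos (k * x))]

theorem one_le_log_natCast {k : ℕ} (hk : 3 ≤ k) : 1 ≤ log k := by
  rw [le_log_iff_exp_le (by positivity)]
  calc exp 1 ≤ 3 := by linarith [exp_one_lt_d9]
    _ ≤ k := by exact_mod_cast hk

-- `log k < 1` exactly for `k ≤ 2`, so the `max` merges the two cases of the definition.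
theorem coeffA_eq (c : ℝ) {k : ℕ} (hk : 0 < k) :
    coeffA c k = c ^ 2 / (π * (k * max 1 (log k))) := by
  rw [coeffA, if_neg hk.ne']
  split_ifs with hk2
  · have hlog : log k < 1 :=
      (log_le_log (by positivity) (by exact_mod_cast hk2 : (k : ℝ) ≤ 2)).trans_lt
        (log_two_lt_d9.trans (by norm_num))
    rw [max_eq_left hlog.le, mul_one]
  · rw [max_eq_right (one_le_log_natCast (by omega)), mul_assoc]

theorem coeffA_nonneg (c : ℝ) (k : ℕ) : 0 ≤ coeffA c k := by
  rcases k.eq_zero_or_pos with rfl | hk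
  · simp [coeffA]
  · rw [coeffA_eq c hk]
    positivity

theorem coeffA_antitoneOn (c : ℝ) : AntitoneOn (coeffA c) (Set.Ioi 0) := by
  intro j hj k hk hjk
  rw [coeffA_eq c hj, coeffA_eq c hk]
  have hj' : (0 : ℝ) < j := by exact_mod_cast hj
  gcongr

theorem coeffA_le (c : ℝ) {k : ℕ} (hk : 0 < k) : coeffA c k ≤ c ^ 2 / (π * k) := by
  rw [coeffA_eq c hk]
  have hk' : (0 : ℝ) < k := by exact_mod_cast hk
  gcongr
  exact le_mul_of_one_le_right hk'.le (le_max_left _ _)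

theorem coeffA_floor_inv_add_one_mul_le (c : ℝ) {x : ℝ} (hx0 : 0 < x) :
    coeffA c (⌊1 / x⌋₊ + 1) * (π / x) ≤ c ^ 2 := by
  have hN : 1 ≤ (⌊1 / x⌋₊ + 1 : ℝ) * x := by
    rw [← div_le_iff₀ hx0]
    exact (Nat.lt_floor_add_one _).le
  calc coeffA c (⌊1 / x⌋₊ + 1) * (π / x)
      ≤ c ^ 2 / (π * (⌊1 / x⌋₊ + 1 : ℕ)) * (π / x) := by
        gcongr
        exact coeffA_le c (Nat.succ_pos _)
    _ = c ^ 2 / ((⌊1 / x⌋₊ + 1 : ℝ) * x) := by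
        push_cast
        field_simp [pi_pos.ne']
    _ ≤ c ^ 2 := div_le_self (sq_nonneg c) hN

theorem gc_eq_sum_Ioc (c : ℝ) (M : ℕ) (x : ℝ) :
    gc c M x = ∑ k ∈ Ioc 0 M, coeffA c k * cos (k * x) := by
  rw [gc, ← Icc_add_one_left_eq_Ioc, zero_add]

theorem gc_abs (c : ℝ) (M : ℕ) (x : ℝ) : gc c M |x| = gc c M x := by
  rcases abs_choice x with h | h <;> simp only [h, gc, mul_neg, cos_neg]

theorem abs_gc_le (c : ℝ) (M : ℕ) {x : ℝ} (hx0 : 0 < |x|) (hxπ : |x| ≤ π) :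
    |gc c M x| ≤ c ^ 2 / |x| := by
  rw [← gc_abs, gc_eq_sum_Ioc]
  calc _ ≤ coeffA c (0 + 1) * (π / |x|) :=
        abs_sum_Ioc_mul_cos_le (coeffA_antitoneOn c) (fun k _ => coeffA_nonneg c k) hx0 hxπ M
    _ = c ^ 2 / |x| := by
        simp only [zero_add, coeffA_eq c one_pos, Nat.cast_one, log_one, zero_le_one, max_eq_left,
          mul_one]
        field_simp [pi_pos.ne']

theorem neg_sq_le_gc (c : ℝ) (M : ℕ) {x : ℝ} (hx : |x| ≤ 1) : -c ^ 2 ≤ gc c M x := by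
  rw [← gc_abs, gc_eq_sum_Ioc]
  rcases (abs_nonneg x).eq_or_lt with hx0 | hx0
  · rw [← hx0]
    simpa using (sum_nonneg fun k _ => coeffA_nonneg c k).trans' (neg_nonpos.mpr (sq_nonneg c))
  have hN : (⌊1 / |x|⌋₊ : ℝ) * |x| ≤ π / 2 := by
    have := Nat.floor_le (one_div_pos.mpr hx0).le
    rw [le_div_iff₀ hx0] at this
    linarith [pi_gt_three]
  have := neg_le_sum_Ioc_mul_cos (coeffA_antitoneOn c) (coeffA_nonneg c) hx0
    (hx.trans (by linarith [pi_gt_three])) hN M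
  linarith [coeffA_floor_inv_add_one_mul_le c hx0]

theorem gc_le_sum_coeffA (c : ℝ) (M : ℕ) (x : ℝ) : gc c M x ≤ ∑ k ∈ Icc 1 M, coeffA c k :=
  sum_le_sum fun k _ => mul_le_of_le_one_right (coeffA_nonneg c k) (cos_le_one _)

theorem stmt14_general (c : ℝ) (hc0 : 0 < c) (hc1 : c ≤ 1) (M : ℕ) :
    (∀ x : ℝ, c ≤ |x| → |x| ≤ π → |gc c M x| ≤ c) ∧
      (∀ x : ℝ, |x| ≤ c → -c ≤ gc c M x ∧ gc c M x ≤ ∑ k ∈ Finset.Icc 1 M, coeffA c k) := by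
  refine ⟨fun x hcx hxπ => ?_, fun x hxc => ⟨?_, gc_le_sum_coeffA c M x⟩⟩
  · have hx0 : 0 < |x| := hc0.trans_le hcx
    refine (abs_gc_le c M hx0 hxπ).trans ?_
    rw [div_le_iff₀ hx0, sq]
    exact mul_le_mul_of_nonneg_left hcx hc0.le
  · have hsq : c ^ 2 ≤ c := by nlinarith
    linarith [neg_sq_le_gc c M (hxc.trans hc1)]

theorem stmt14 (c : ℝ) (hc0 : 0 < c) (hc1 : c ≤ 1) (M : ℕ) (hM : 1 ≤ M) :
    (∀ x : ℝ, c ≤ |x| → |x| ≤ π → |gc c M x| ≤ c) ∧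
      (∀ x : ℝ, |x| ≤ c → -c ≤ gc c M x ∧ gc c M x ≤ ∑ k ∈ Finset.Icc 1 M, coeffA c k) :=
  stmt14_general c hc0 hc1 M
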